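/- Every cyclic bilinear form on a coalgebra is symmetric: if •_M : M × M → K satisfies (l •_M m'')·m' ⊗ m''' = (m •_M l'')·l''' ⊗ l' for all l, m ∈ M, then l •_M m = m •_M l for all l, m ∈ M. -/

import Mathlib

open scoped TensorProduct

/-- The iterated comultiplication `m ↦ m' ⊗ m'' ⊗ m'''` of a coalgebra. -/
noncomputable def comulIter3 (K : Type*) {M : Type*} [CommRing K] [AddCommGroup M]
    [Module K M] [Coalgebra K M] (m : M) : (M ⊗[K] M) ⊗[K] M :=
  LinearMap.rTensor M (Coalgebra.comul (R := K)) (Coalgebra.comul m)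

/-- `∑ i ∈ s, f i ⊗ g i ⊗ h i` is a representation of the iterated
comultiplication `m' ⊗ m'' ⊗ m'''` of `m`. -/
def IsRepr3 (K : Type*) {M : Type*} [CommRing K] [AddCommGroup M]
    [Module K M] [Coalgebra K M] (m : M) (s : Finset ℕ) (f g h : ℕ → M) : Prop :=
  ∑ i ∈ s, (f i ⊗ₜ[K] g i) ⊗ₜ[K] h i = comulIter3 K m

/-- A bilinear form `β` on a coalgebra `M` is cyclic if
`(l • m'')·m' ⊗ m''' = (m • l'')·l''' ⊗ l'` in `M ⊗ M` for all `l, m ∈ M`. -/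
def IsCyclicForm (K : Type*) {M : Type*} [CommRing K] [AddCommGroup M]
    [Module K M] [Coalgebra K M] (β : M →ₗ[K] M →ₗ[K] K) : Prop :=
  ∀ (l m : M) (sl sm : Finset ℕ) (l1 l2 l3 m1 m2 m3 : ℕ → M),
    IsRepr3 K l sl l1 l2 l3 → IsRepr3 K m sm m1 m2 m3 →
    ∑ j ∈ sm, β l (m2 j) • (m1 j ⊗ₜ[K] m3 j) =
      ∑ i ∈ sl, β m (l2 i) • (l3 i ⊗ₜ[K] l1 i)

/-! Apply `ε ⊗ ε` to both sides of the cyclicity identity. By counitality, contracting the two outer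
legs of `m' ⊗ m'' ⊗ m'''` with `ε` gives back `m`, so the left side becomes `l • m` and the right
side `m • l`. -/

open Finset TensorProduct
open Coalgebra (counit comul)

theorem Finset.exists_sum_range_add {α β : Type*} [AddCommMonoid β] {F : α → β} {x y : β}
    (hx : ∃ (n : ℕ) (t : ℕ → α), ∑ i ∈ range n, F (t i) = x)
    (hy : ∃ (n : ℕ) (t : ℕ → α), ∑ i ∈ range n, F (t i) = y) :
    ∃ (n : ℕ) (t : ℕ → α), ∑ i ∈ range n, F (t i) = x + y := by
  obtain ⟨n₁, t₁, rfl⟩ := hx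
  obtain ⟨n₂, t₂, rfl⟩ := hy
  refine ⟨n₁ + n₂, fun i => if i < n₁ then t₁ i else t₂ (i - n₁), ?_⟩
  rw [sum_range_add]
  congr 1
  · exact sum_congr rfl fun i hi => by simp [mem_range.mp hi]
  · simp

theorem TensorProduct.exists_sum_range_tmul_tmul {R M N P : Type*} [CommSemiring R]
    [AddCommMonoid M] [AddCommMonoid N] [AddCommMonoid P] [Module R M] [Module R N] [Module R P]
    (x : (M ⊗[R] N) ⊗[R] P) :
    ∃ (n : ℕ) (t : ℕ → M × N × P), ∑ i ∈ range n, ((t i).1 ⊗ₜ[R] (t i).2.1) ⊗ₜ[R] (t i).2.2 = x := by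
  let F : M × N × P → (M ⊗[R] N) ⊗[R] P := fun t => (t.1 ⊗ₜ t.2.1) ⊗ₜ t.2.2
  change ∃ (n : ℕ) (t : ℕ → M × N × P), ∑ i ∈ range n, F (t i) = x
  induction x using TensorProduct.induction_on with
  | zero => exact ⟨0, 0, rfl⟩
  | add x y hx hy => exact exists_sum_range_add hx hy
  | tmul y c =>
    induction y using TensorProduct.induction_on with
    | zero => exact ⟨0, 0, by simp⟩
    | tmul a b => exact ⟨1, fun _ => (a, b, c), by simp [F]⟩
    | add y₁ y₂ hy₁ hy₂ => simpa only [add_tmul] using exists_sum_range_add hy₁ hy₂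

section

variable {K M : Type*} [CommRing K] [AddCommGroup M] [Module K M] [Coalgebra K M]

theorem exists_isRepr3 (m : M) : ∃ (s : Finset ℕ) (f g h : ℕ → M), IsRepr3 K m s f g h := by
  obtain ⟨n, t, ht⟩ := exists_sum_range_tmul_tmul (comulIter3 K m)
  exact ⟨range n, fun i => (t i).1, fun i => (t i).2.1, fun i => (t i).2.2, ht⟩

theorem Coalgebra.mul'_map_counit_comul (φ : M →ₗ[K] K) (m : M) :
    LinearMap.mul' K K (map counit φ (comul m)) = φ m := by
  rw [← LinearMap.lTensor_comp_rTensor, LinearMap.comp_apply, Coalgebra.rTensor_counit_comul]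
  simp

theorem Coalgebra.mul'_map_comul_counit (φ : M →ₗ[K] K) (m : M) :
    LinearMap.mul' K K (map φ counit (comul m)) = φ m := by
  rw [← LinearMap.rTensor_comp_lTensor, LinearMap.comp_apply, Coalgebra.lTensor_counit_comul]
  simp

theorem IsRepr3.sum_mul_counit_mul_counit {m : M} {s : Finset ℕ} {f g h : ℕ → M}
    (hr : IsRepr3 K m s f g h) (φ : M →ₗ[K] K) :
    ∑ i ∈ s, φ (g i) * (counit (f i) * counit (h i)) = φ m := by
  have contract_left : (LinearMap.mul' K K ∘ₗ map counit φ) ∘ₗ comul = φ :=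
    LinearMap.ext (Coalgebra.mul'_map_counit_comul φ)
  have contract_comulIter3 : LinearMap.mul' K K (map (LinearMap.mul' K K ∘ₗ map counit φ) counit
      (comulIter3 K m)) = φ m := by
    rw [comulIter3, LinearMap.map_rTensor, contract_left, Coalgebra.mul'_map_comul_counit]
  rw [← contract_comulIter3, ← hr, map_sum, map_sum]
  refine sum_congr rfl fun i _ => ?_
  simp only [map_tmul, LinearMap.comp_apply, LinearMap.mul'_apply]
  ring

end

/-- Every cyclic bilinear form on a coalgebra is symmetric. -/
theorem cyclic_form_symmetric
    {K M : Type*} [CommRing K] [AddCommGroup M] [Module K M] [Coalgebra K M]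
    (β : M →ₗ[K] M →ₗ[K] K) (hcyc : IsCyclicForm K β) :
    ∀ l m : M, β l m = β m l := by
  intro l m
  obtain ⟨sl, l₁, l₂, l₃, hl⟩ := exists_isRepr3 (K := K) l
  obtain ⟨sm, m₁, m₂, m₃, hm⟩ := exists_isRepr3 (K := K) m
  have hcounit := congrArg (LinearMap.mul' K K ∘ₗ map counit counit)
    (hcyc l m sl sm l₁ l₂ l₃ m₁ m₂ m₃ hl hm)
  simp only [LinearMap.comp_apply, map_sum, map_smul, map_tmul, LinearMap.mul'_apply,
    smul_eq_mul] at hcounit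
  rw [← hm.sum_mul_counit_mul_counit (β l), ← hl.sum_mul_counit_mul_counit (β m), hcounit]
  simp only [mul_comm (counit (l₃ _))]
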